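/- Let a, b, c ∈ L with a ≠ 0, c ≠ 0 and a^q + [1] ≠ 0, let c' ∈ L satisfy c'^q = c − [1], and assume ⟨c⟩_m ≠ 0 and ⟨c'⟩_m ≠ 0 for all m. Then the following contiguous relation holds in L⟦X⟧: ₂F₁(a, b; c; X) − (₂F₁(a, b; c; X))^q + (c^q − b^q)·(₂F₁(a, b; c'; c^{−1}X))^q − (a^q + [1])·₂F₁(a^q + [1], b; c; (a^q + [1])^{−1}X) = 0. -/

import Mathlib

/-- The Carlitz bracket `[i] = x^{q^i} - x`. -/
def br (q : ℕ) {L : Type*} [Field L] (x : L) (i : ℕ) : L := x ^ q ^ i - x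

/-- The Pochhammer-type symbol `⟨a⟩_m = ([0]-a)^{q^m} ([1]-a)^{q^{m-1}} ⋯ ([m-1]-a)^q`. -/
def poch (q : ℕ) {L : Type*} [Field L] (x a : L) (m : ℕ) : L :=
  ∏ k ∈ Finset.range m, (br q x k - a) ^ q ^ (m - k)

/-- The Carlitz factorial `D_0 = 1`, `D_m = [m]·D_{m-1}^q`. -/
def DD (q : ℕ) {L : Type*} [Field L] (x : L) : ℕ → L
  | 0 => 1
  | m + 1 => br q x (m + 1) * (DD q x m) ^ q

/-- The formal power series `Σ_{m≥0} f m · X^{q^m}` (for `q ≥ 2` the exponents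
`q^m` are distinct and `q^m ≤ n` forces `m ≤ n`, so the coefficient of `X^n` is
`f m` if `n = q^m` for (the unique) such `m`, and `0` otherwise). -/
noncomputable def seriesOf (q : ℕ) {L : Type*} [Field L] (f : ℕ → L) : PowerSeries L :=
  PowerSeries.mk fun n => ∑ m ∈ Finset.range (n + 1), if n = q ^ m then f m else 0

/-- The Gauss-type hypergeometric series `₂F₁(a,b;c;λX) = Σ_m (⟨a⟩_m⟨b⟩_m)/(⟨c⟩_m D_m) · λ^{q^m} X^{q^m}`. -/
noncomputable def hyp2F1 (q : ℕ) {L : Type*} [Field L] (x a b c lam : L) : PowerSeries L :=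
  seriesOf q fun m => poch q x a m * poch q x b m / (poch q x c m * DD q x m) * lam ^ q ^ m

section Aux

variable {L : Type*} [Field L] {q : ℕ}

lemma poch_zero (x a : L) : poch q x a 0 = 1 := by simp [poch]

lemma poch_succ (x a : L) (m : ℕ) :
    poch q x a (m + 1) = (br q x m - a) ^ q * (poch q x a m) ^ q := by
  unfold poch
  rw [Finset.prod_range_succ, ← Finset.prod_pow, mul_comm]
  congr 1
  · simp
  · refine Finset.prod_congr rfl fun k hk => ?_
    rw [Finset.mem_range] at hk
    rw [← pow_mul, ← pow_succ]
    congr 2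
    omega

lemma coeff_seriesOf (hq : 2 ≤ q) (f : ℕ → L) (n : ℕ) :
    PowerSeries.coeff n (seriesOf q f) =
      if q ^ Nat.log q n = n then f (Nat.log q n) else 0 := by
  simp only [seriesOf, PowerSeries.coeff_mk]
  split_ifs with h
  · rw [Finset.sum_eq_single_of_mem (Nat.log q n)
      (Finset.mem_range.2 (Nat.lt_succ_of_le (Nat.log_le_self _ _)))
      (fun m _ hm => if_neg fun hn => hm (by rw [hn, Nat.log_pow hq]))]
    exact if_pos h.symm
  · refine Finset.sum_eq_zero fun m _ => ?_
    rw [if_neg]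
    intro hn
    exact h (by rw [hn, Nat.log_pow hq])

lemma coeff_pow_char_pow {p : ℕ} (hp : p.Prime) [CharP L p] (v : ℕ) (φ : PowerSeries L) (n : ℕ) :
    PowerSeries.coeff n (φ ^ p ^ v) =
      if p ^ v ∣ n then (PowerSeries.coeff (n / p ^ v) φ) ^ p ^ v else 0 := by
  haveI := Fact.mk hp
  have hq0 : 0 < p ^ v := pow_pos hp.pos v
  set g : Polynomial L := PowerSeries.trunc (n + 1) φ with hg
  have h1 : PowerSeries.coeff n (φ ^ p ^ v) = (g ^ p ^ v).coeff n := by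
    have := PowerSeries.trunc_trunc_pow φ (n + 1) (p ^ v)
    have h2 := congrArg (fun ψ => Polynomial.coeff ψ n) this
    simp only [PowerSeries.coeff_trunc, if_pos (Nat.lt_succ_self n)] at h2
    rw [← h2, ← Polynomial.coe_pow, Polynomial.coeff_coe]
  rw [h1, ← Polynomial.map_iterateFrobenius_expand, Polynomial.coeff_map,
    Polynomial.coeff_expand hq0, iterateFrobenius_def]
  split_ifs with h
  · rw [hg, PowerSeries.coeff_trunc, if_pos (Nat.lt_succ_of_le (Nat.div_le_self n _))]
  · exact zero_pow (pow_pos hp.pos v).ne'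

end Aux

section CharAux

variable {L : Type*} [Field L] {q : ℕ} (hq0 : q ≠ 0)
  (hfrob : ∀ y z : L, (y - z) ^ q = y ^ q - z ^ q)

include hq0 hfrob

lemma frob_neg (t : L) : (-t) ^ q = -(t ^ q) := by
  have := hfrob 0 t
  simpa [zero_pow hq0] using this

omit hq0 in
lemma br_succ (x : L) (m : ℕ) :
    br q x (m + 1) = (br q x m) ^ q + br q x 1 := by
  unfold br
  rw [hfrob, ← pow_mul, ← pow_succ, pow_one]
  ring

lemma poch_shift_a (x a : L) (m : ℕ) :
    poch q x (a ^ q + br q x 1) (m + 1)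
      = -((a ^ q + br q x 1) ^ q ^ (m + 1)) * (poch q x a m) ^ q := by
  induction m with
  | zero =>
    rw [poch_succ, poch_zero, poch_zero]
    simp only [br, pow_zero, pow_one, sub_self, one_pow, mul_one, zero_sub,
      frob_neg hq0 hfrob, zero_add]
  | succ k ih =>
    have h1 : br q x (k + 1) - (a ^ q + br q x 1) = (br q x k - a) ^ q := by
      rw [br_succ hfrob x k, hfrob]
      ring
    rw [poch_succ, ih, poch_succ, h1, mul_pow, frob_neg hq0 hfrob]
    ring

lemma poch_shift_c (x c c' : L) (hc' : c' ^ q = c - br q x 1) (m : ℕ) :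
    c ^ q ^ (m + 1) * (poch q x c' m) ^ q = - poch q x c (m + 1) := by
  induction m with
  | zero =>
    rw [poch_zero, poch_succ, poch_zero]
    simp only [br, pow_zero, pow_one, sub_self, one_pow, mul_one, zero_sub,
      frob_neg hq0 hfrob, zero_add]
    ring
  | succ k ih =>
    have h1 : (br q x k - c') ^ q = br q x (k + 1) - c := by
      rw [hfrob, hc', br_succ hfrob x k]
      ring
    have key : c ^ q ^ (k + 2) * (poch q x c' (k + 1)) ^ q
        = (br q x (k + 1) - c) ^ q * (c ^ q ^ (k + 1) * (poch q x c' k) ^ q) ^ q := by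
      rw [poch_succ, ← h1]
      ring
    rw [key, ih, frob_neg hq0 hfrob, poch_succ x c (k + 1)]
    ring

end CharAux

lemma DD_ne_zero {L : Type*} [Field L] {q : ℕ} (x : L)
    (hbr : ∀ i : ℕ, 1 ≤ i → br q x i ≠ 0) (m : ℕ) : DD q x m ≠ 0 := by
  induction m with
  | zero => simp [DD]
  | succ k ih => exact mul_ne_zero (hbr (k + 1) (Nat.le_add_left 1 k)) (pow_ne_zero _ ih)

/-- The contiguous relation
`₂F₁(a,b;c;X) − ₂F₁(a,b;c;X)^q + (c^q−b^q)·₂F₁(a,b;T₁(c);c⁻¹X)^q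
  − (a^q+[1])·₂F₁(T₋₁(a),b;c;(a^q+[1])⁻¹X) = 0` in `L⟦X⟧`. -/
theorem stmt6 {p v q : ℕ} (hp : p.Prime) (hv : 0 < v) (hq : q = p ^ v)
    {L : Type*} [Field L] [CharP L p] (x : L)
    (hbr : ∀ i : ℕ, 1 ≤ i → br q x i ≠ 0)
    (a b c c' : L) (ha : a ≠ 0) (hc : c ≠ 0) (ha1 : a ^ q + br q x 1 ≠ 0)
    (hc' : c' ^ q = c - br q x 1)
    (hcm : ∀ m : ℕ, poch q x c m ≠ 0) (hc'm : ∀ m : ℕ, poch q x c' m ≠ 0) :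
    hyp2F1 q x a b c 1 - (hyp2F1 q x a b c 1) ^ q
        + PowerSeries.C (c ^ q - b ^ q) * (hyp2F1 q x a b c' c⁻¹) ^ q
        - PowerSeries.C (a ^ q + br q x 1)
            * hyp2F1 q x (a ^ q + br q x 1) b c (a ^ q + br q x 1)⁻¹
      = 0 := by
  
  haveI := Fact.mk hp
  have hq1 : 1 < q := by
    rw [hq]
    exact Nat.one_lt_pow hv.ne' hp.one_lt
  have hq2 : 2 ≤ q := hq1
  have hq0 : q ≠ 0 := by omega
  have hfrob : ∀ y z : L, (y - z) ^ q = y ^ q - z ^ q := by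
    intro y z
    rw [hq]
    exact sub_pow_char_pow y z v
  have hcpow : ∀ (φ : PowerSeries L) (n : ℕ),
      PowerSeries.coeff n (φ ^ q) =
        if q ∣ n then (PowerSeries.coeff (n / q) φ) ^ q else 0 := by
    intro φ n
    rw [hq]
    exact coeff_pow_char_pow hp v φ n
  ext n
  simp only [hyp2F1, map_sub, map_add, sub_mul, add_mul, PowerSeries.coeff_C_mul, map_zero,
    hcpow, coeff_seriesOf hq2]
  by_cases hn : q ^ Nat.log q n = n
  · obtain ⟨m, rfl⟩ : ∃ m, n = q ^ m := ⟨_, hn.symm⟩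
    simp only [Nat.log_pow hq1, eq_self_iff_true, if_true]
    match m with
    | 0 =>
      have hnd : ¬ (q ∣ q ^ 0) := by
        intro h
        rw [pow_zero] at h
        have := Nat.le_of_dvd one_pos h
        omega
      rw [if_neg hnd, if_neg hnd]
      simp only [poch_zero, DD, pow_zero, pow_one, one_pow, mul_one, one_mul, zero_pow hq0,
        mul_zero, sub_zero, add_zero, one_div, inv_one]
      field_simp
      ring
    | k + 1 =>
      have hdvd : q ∣ q ^ (k + 1) := dvd_pow_self q (Nat.succ_ne_zero k)
      have hdiv : q ^ (k + 1) / q = q ^ k := by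
        rw [pow_succ, Nat.mul_div_cancel _ (by omega)]
      rw [if_pos hdvd, if_pos hdvd, hdiv, Nat.log_pow hq1]
      simp only [eq_self_iff_true, if_true, one_pow, mul_one]
      -- abbreviations and nonvanishing facts
      have hDk : DD q x k ≠ 0 := DD_ne_zero x hbr k
      have hDk1 : DD q x (k + 1) ≠ 0 := DD_ne_zero x hbr (k + 1)
      have hRk : poch q x c k ≠ 0 := hcm k
      have hRk1 : poch q x c (k + 1) ≠ 0 := hcm (k + 1)
      have hc'k : poch q x c' k ≠ 0 := hc'm k
      have hSk : (br q x k - c) ^ q ≠ 0 := by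
        have h5 := hcm (k + 1)
        rw [poch_succ] at h5
        exact (mul_ne_zero_iff.1 h5).1
      have hbrk1 : br q x (k + 1) ≠ 0 := hbr (k + 1) (Nat.le_add_left 1 k)
      have hDD1 : DD q x (k + 1) = br q x (k + 1) * DD q x k ^ q := rfl
      have hc'q : (poch q x c' k) ^ q = - poch q x c (k + 1) / c ^ q ^ (k + 1) := by
        rw [eq_div_iff (pow_ne_zero _ hc)]
        linear_combination poch_shift_c hq0 hfrob x c c' hc' k
      -- term 2
      have e2 : (poch q x a k * poch q x b k / (poch q x c k * DD q x k)) ^ q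
          = (poch q x a k) ^ q * (poch q x b k) ^ q * ((br q x k - c) ^ q * br q x (k + 1))
            / (poch q x c (k + 1) * DD q x (k + 1)) := by
        rw [div_pow, mul_pow, poch_succ x c k, hDD1]
        field_simp
        ring
      -- term 3
      have e3 : (poch q x a k * poch q x b k / (poch q x c' k * DD q x k) * c⁻¹ ^ q ^ k) ^ q
          = -((poch q x a k) ^ q * (poch q x b k) ^ q * br q x (k + 1))
            / (poch q x c (k + 1) * DD q x (k + 1)) := by
        rw [mul_pow, div_pow, mul_pow, mul_pow, hc'q, hDD1]
        field_simp
        rw [← pow_mul, ← pow_succ, mul_assoc _ (c ^ q ^ (k + 1)), ← mul_pow c (1 / c), mul_one_div_cancel hc,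
          one_pow, mul_one]
      -- term 4
      have e4 : poch q x (a ^ q + br q x 1) (k + 1) * poch q x b (k + 1)
            / (poch q x c (k + 1) * DD q x (k + 1)) * ((a ^ q + br q x 1)⁻¹) ^ q ^ (k + 1)
          = -((poch q x a k) ^ q * poch q x b (k + 1))
            / (poch q x c (k + 1) * DD q x (k + 1)) := by
        rw [poch_shift_a hq0 hfrob x a k, inv_pow]
        field_simp
      rw [e2, e3, e4]
      simp only [← mul_div_assoc, ← sub_div, ← add_div]
      rw [div_eq_zero_iff]
      left
      rw [poch_succ x a k, poch_succ x b k,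
        br_succ hfrob x k, hfrob (br q x k) a, hfrob (br q x k) b, hfrob (br q x k) c]
      ring
  · by_cases hd : q ∣ n
    · have hin : ¬ (q ^ Nat.log q (n / q) = n / q) := by
        intro h2
        rcases Nat.eq_zero_or_pos n with h0 | h0
        · rw [h0] at h2
          simp at h2
        · apply hn
          have hne : n = q ^ (Nat.log q (n / q) + 1) := by
            rw [pow_succ, h2]
            exact (Nat.div_mul_cancel hd).symm
          rw [hne, Nat.log_pow hq1]
      simp only [if_neg hn, if_neg hin, if_pos hd, zero_pow hq0]
      ring
    · simp only [if_neg hn, if_neg hd]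
      ring
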